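/- arXiv:2407.18330 — 4 statements merged into one kernel-verified Lean document; each statement's English description precedes it below -/
import Mathlib

section
/- The monoid Function.End ℕ of all functions ℕ → ℕ under composition, equipped with the pointwise topology (ℕ discrete), is a left powder monoid but is not a right powder monoid. (Hence there exists a left powder monoid that is not a right powder monoid, resolving Rogers's question.) -/
/-- A left powder monoid: a T₀ topological monoid whose topology has a basis of clopen
sets `U` such that for every `p`, the set `{q | ∀ r, r * q ∈ U ↔ r * p ∈ U}` is open. -/
def IsLeftPowderMonoid (M : Type*) [Monoid M] (τ : TopologicalSpace M) : Prop :=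
  letI := τ
  T0Space M ∧ Continuous (fun p : M × M => p.1 * p.2) ∧
    ∃ B : Set (Set M), TopologicalSpace.IsTopologicalBasis B ∧
      (∀ U ∈ B, IsClopen U) ∧
      (∀ U ∈ B, ∀ p : M, IsOpen {q : M | ∀ r : M, r * q ∈ U ↔ r * p ∈ U})

/-- A right powder monoid: a T₀ topological monoid whose topology has a basis of clopen
sets `U` such that for every `p`, the set `{q | ∀ r, q * r ∈ U ↔ p * r ∈ U}` is open;
equivalently, the opposite monoid (with the same topology) is left powder. -/
def IsRightPowderMonoid (M : Type*) [Monoid M] (τ : TopologicalSpace M) : Prop :=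
  letI := τ
  T0Space M ∧ Continuous (fun p : M × M => p.1 * p.2) ∧
    ∃ B : Set (Set M), TopologicalSpace.IsTopologicalBasis B ∧
      (∀ U ∈ B, IsClopen U) ∧
      (∀ U ∈ B, ∀ p : M, IsOpen {q : M | ∀ r : M, q * r ∈ U ↔ p * r ∈ U})

/-- The pointwise (product of discrete) topology on `Function.End X`. -/
def endTopology (X : Type*) : TopologicalSpace (Function.End X) :=
  @Pi.topologicalSpace X (fun _ => X) (fun _ => ⊥)

open TopologicalSpace Set

/-- Every open set in the pointwise topology contains a finite cylinder around each point. -/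
lemma endNat_cylinder_subset {s : Set (ℕ → ℕ)} (hs : IsOpen s) {f : ℕ → ℕ} (hf : f ∈ s) :
    ∃ F : Finset ℕ, ∀ g : ℕ → ℕ, (∀ i ∈ F, g i = f i) → g ∈ s := by
  rw [isOpen_pi_iff] at hs
  obtain ⟨I, u, h1, h2⟩ := hs f hf
  refine ⟨I, fun g hg => h2 ?_⟩
  intro i hi
  rw [hg i hi]
  exact (h1 i hi).2

/-- Composition is continuous for the pointwise topology. -/
lemma endNat_comp_continuous :
    Continuous (fun p : (ℕ → ℕ) × (ℕ → ℕ) => p.1 ∘ p.2) := by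
  apply continuous_pi
  intro x
  have h : ∀ n : ℕ, IsOpen ((fun p : (ℕ → ℕ) × (ℕ → ℕ) => p.1 (p.2 x)) ⁻¹' {n}) := by
    intro n
    have : (fun p : (ℕ → ℕ) × (ℕ → ℕ) => p.1 (p.2 x)) ⁻¹' {n}
        = ⋃ m : ℕ, {f : ℕ → ℕ | f m = n} ×ˢ {g : ℕ → ℕ | g x = m} := by
      ext p
      simp only [mem_preimage, mem_singleton_iff, mem_iUnion, mem_prod, mem_setOf_eq]
      constructor
      · intro hp; exact ⟨p.2 x, by rw [hp], rfl⟩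
      · rintro ⟨m, h1, h2⟩; rw [← h2] at h1; exact h1
    rw [this]
    refine isOpen_iUnion fun m => IsOpen.prod ?_ ?_
    · have hc : Continuous fun f : ℕ → ℕ => f m := continuous_apply m
      exact hc.isOpen_preimage ({n} : Set ℕ) (isOpen_discrete _)
    · have hc : Continuous fun g : ℕ → ℕ => g x := continuous_apply x
      exact hc.isOpen_preimage ({m} : Set ℕ) (isOpen_discrete _)
  rw [continuous_discrete_rng]
  exact fun n => h n

theorem endNat_left_powder_not_right_powder :
    IsLeftPowderMonoid (Function.End ℕ) (endTopology ℕ) ∧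
      ¬ IsRightPowderMonoid (Function.End ℕ) (endTopology ℕ) := by
  letI : TopologicalSpace (Function.End ℕ) := endTopology ℕ
  constructor
  · refine ⟨inferInstanceAs (T0Space (ℕ → ℕ)), endNat_comp_continuous, ?_⟩
    refine ⟨{ S : Set (ℕ → ℕ) | ∃ (U : ℕ → Set ℕ) (F : Finset ℕ),
        (∀ i, i ∈ F → U i ∈ {s : Set ℕ | ∃ x : ℕ, s = {x}}) ∧ S = (F : Set ℕ).pi U },
        isTopologicalBasis_pi fun _ => isTopologicalBasis_singletons ℕ, ?_, ?_⟩
    · rintro S ⟨U, F, hU, rfl⟩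
      constructor
      · rw [Set.pi_def]
        exact isClosed_biInter fun i hi =>
          (isClosed_discrete (U i)).preimage (continuous_apply i)
      · exact (isTopologicalBasis_pi fun _ => isTopologicalBasis_singletons ℕ).isOpen
          ⟨U, F, hU, rfl⟩
    · rintro S ⟨U, F, hU, rfl⟩ p
      rw [isOpen_iff_forall_mem_open]
      intro q hq
      refine ⟨(F : Set ℕ).pi (fun i => {q i}), ?_, ?_, ?_⟩
      · intro q' hq'
        intro r
        have key : ∀ i ∈ (F : Set ℕ), r (q' i) = r (q i) := by
          intro i hi
          rw [show q' i = q i from hq' i hi]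
        have hrq : (r * q' ∈ (F : Set ℕ).pi U) ↔ (r * q ∈ (F : Set ℕ).pi U) := by
          constructor <;> intro h i hi
          · have h2 := h i hi
            rwa [show (r * q') i = r (q' i) from rfl, key i hi] at h2
          · have h2 := h i hi
            rwa [show (r * q) i = r (q i) from rfl, ← key i hi] at h2
        exact hrq.trans (hq r)
      · exact isOpen_set_pi F.finite_toSet fun i _ => isOpen_discrete _
      · exact fun i _ => rfl
  · rintro ⟨-, -, B, hB, -, hpow⟩
    -- V = {f | f 0 = 0} is open and contains the identity
    have hVopen : IsOpen {f : ℕ → ℕ | f 0 = 0} :=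
      (continuous_apply 0).isOpen_preimage {0} (isOpen_discrete _)
    obtain ⟨U, hUB, hidU, hUV⟩ :=
      hB.exists_subset_of_mem_open (show (1 : Function.End ℕ) ∈ {f : ℕ → ℕ | f 0 = 0} from rfl)
        hVopen
    -- the set J is open and contains 1
    have hJopen : IsOpen {q : Function.End ℕ | ∀ r : Function.End ℕ, q * r ∈ U ↔ 1 * r ∈ U} :=
      hpow U hUB 1
    have hidJ : (1 : Function.End ℕ) ∈
        {q : Function.End ℕ | ∀ r : Function.End ℕ, q * r ∈ U ↔ 1 * r ∈ U} :=
      fun _ => Iff.rfl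
    obtain ⟨F₁, hF₁⟩ := endNat_cylinder_subset (hB.isOpen hUB) hidU
    obtain ⟨F₂, hF₂⟩ := endNat_cylinder_subset hJopen hidJ
    set s : Finset ℕ := F₁ ∪ F₂ ∪ {0} with hs
    set M : ℕ := (s.sup id) + 1 with hM
    have hMs : M ∉ s := by
      intro hc
      have h := Finset.le_sup (f := id) hc
      simp only [id] at h
      omega
    set q : Function.End ℕ := fun x => if x ∈ s then x else 0 with hqdef
    set r : Function.End ℕ := fun x => if x = 0 then M else x with hrdef
    -- q ∈ J
    have hqJ : q ∈
        {q : Function.End ℕ | ∀ r : Function.End ℕ, q * r ∈ U ↔ 1 * r ∈ U} := by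
      apply hF₂
      intro i hi
      have his : i ∈ s := by
        simp only [hs, Finset.mem_union]
        exact Or.inl (Or.inr hi)
      simp only [hqdef, if_pos his]
      rfl
    -- q * r ∈ U
    have hqrU : q * r ∈ U := by
      apply hF₁
      intro i hi
      have his : i ∈ s := by
        simp only [hs, Finset.mem_union]
        exact Or.inl (Or.inl hi)
      show q (r i) = (1 : Function.End ℕ) i
      by_cases h0 : i = 0
      · subst h0
        simp only [hrdef, if_pos rfl, hqdef, if_neg hMs]
        rfl
      · simp only [hrdef, if_neg h0, hqdef, if_pos his]
        rfl
    -- hence r ∈ U, but r 0 = M ≠ 0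
    have hrU : r ∈ U := by
      have := (hqJ r).mp hqrU
      rwa [one_mul] at this
    have hr0 : r 0 = 0 := hUV hrU
    simp only [hrdef, if_pos rfl] at hr0
    omega
end

section
/- (Abstract chirality criterion) Let X be a type and M a submonoid of Function.End X, equipped with the pointwise topology. Suppose there are A, B ∈ M and a point x₀ ∈ X such that: (i) for every r ∈ M, (B * r) x₀ ≠ A x₀; and (ii) for all finite subsets s, t ⊆ X there exist q, r ∈ M with q x = B x for all x ∈ s and (q * r) x = A x for all x ∈ t. Then (M, pointwise topology) is not a right powder monoid; indeed, for every open set U with A ∈ U ⊆ {k ∈ M : k x₀ = A x₀}, the set {q ∈ M : ∀ r ∈ M, (q * r ∈ U ↔ B * r ∈ U)} contains B but is not open. -/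
/-- The pointwise topology on a submonoid of `Function.End X`. -/
def subTopology {X : Type*} (M : Submonoid (Function.End X)) : TopologicalSpace M :=
  (endTopology X).induced Subtype.val

lemma basic_nhd {X : Type*} (M : Submonoid (Function.End X)) (S : Set M)
    (hS : @IsOpen M (subTopology M) S) (f : M) (hf : f ∈ S) :
    ∃ s : Finset X, ∀ q : M,
      (∀ x ∈ s, (q : Function.End X) x = (f : Function.End X) x) → q ∈ S := by
  letI : TopologicalSpace X := ⊥
  letI : TopologicalSpace (Function.End X) := endTopology X
  rw [subTopology, isOpen_induced_iff] at hS
  obtain ⟨V, hV, rfl⟩ := hS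
  have hV' := (@isOpen_pi_iff X (fun _ => X) (fun _ => ⊥) V).mp hV
  obtain ⟨I, u, hu, hsub⟩ := hV' (f : Function.End X) hf
  refine ⟨I, fun q hq => hsub fun i hi => ?_⟩
  rw [hq i hi]
  exact (hu i hi).2


/-- Abstract chirality criterion. -/
theorem chirality_criterion (X : Type*) (M : Submonoid (Function.End X))
    (A B : M) (x₀ : X)
    (h1 : ∀ r : M, ((B * r : M) : Function.End X) x₀ ≠ (A : Function.End X) x₀)
    (h2 : ∀ s t : Finset X, ∃ q r : M,
      (∀ x ∈ s, (q : Function.End X) x = (B : Function.End X) x) ∧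
      (∀ x ∈ t, ((q * r : M) : Function.End X) x = (A : Function.End X) x)) :
    ¬ IsRightPowderMonoid M (subTopology M) ∧
      (letI := subTopology M
      ∀ U : Set M, IsOpen U → A ∈ U →
        U ⊆ {k : M | (k : Function.End X) x₀ = (A : Function.End X) x₀} →
        B ∈ {q : M | ∀ r : M, q * r ∈ U ↔ B * r ∈ U} ∧
          ¬ IsOpen {q : M | ∀ r : M, q * r ∈ U ↔ B * r ∈ U}) := by
  letI := subTopology M
  have main : ∀ U : Set M, IsOpen U → A ∈ U →
      U ⊆ {k : M | (k : Function.End X) x₀ = (A : Function.End X) x₀} →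
      B ∈ {q : M | ∀ r : M, q * r ∈ U ↔ B * r ∈ U} ∧
        ¬ IsOpen {q : M | ∀ r : M, q * r ∈ U ↔ B * r ∈ U} := by
    intro U hU hA hsub
    refine ⟨fun r => Iff.rfl, fun hop => ?_⟩
    obtain ⟨s, hs⟩ := basic_nhd M _ hop B (fun r => Iff.rfl)
    obtain ⟨t, ht⟩ := basic_nhd M U hU A hA
    obtain ⟨q, r, hq, hqr⟩ := h2 s t
    have hqS : q ∈ {q : M | ∀ r : M, q * r ∈ U ↔ B * r ∈ U} := hs q hq
    have hqrU : q * r ∈ U := ht _ hqr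
    have : B * r ∈ U := (hqS r).mp hqrU
    exact h1 r (hsub this)
  refine ⟨?_, main⟩
  rintro ⟨-, -, 𝒞, hbasis, -, hpow⟩
  have hopen : IsOpen {k : M | (k : Function.End X) x₀ = (A : Function.End X) x₀} := by
    letI : TopologicalSpace X := ⊥
    letI := endTopology X
    have hc : Continuous fun k : M => (k : Function.End X) x₀ :=
      (continuous_apply x₀).comp continuous_induced_dom
    exact hc.isOpen_preimage {(A : Function.End X) x₀} trivial
  have hAmem : A ∈ {k : M | (k : Function.End X) x₀ = (A : Function.End X) x₀} := rfl
  obtain ⟨U, hU𝒞, hAU, hUsub⟩ := hbasis.exists_subset_of_mem_open hAmem hopen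
  exact (main U (hbasis.isOpen hU𝒞) hAU hUsub).2 (hpow U hU𝒞 B)
end

section
/- Let X be a type and M a submonoid of Function.End X, equipped with the pointwise topology. Then (M, pointwise topology) is a left powder monoid: it is a T₀ topological monoid, the sets [j]_s = {k ∈ M : ∀ x ∈ s, k x = j x} (for j ∈ M, s ⊆ X finite) form a basis of clopen sets, and for every such basic set U and every p ∈ M the set I^U_p = {q ∈ M : ∀ r ∈ M, (r * q ∈ U ↔ r * p ∈ U)} is open. -/
open Topology TopologicalSpace

namespace Function.End

variable {X : Type*} {M : Submonoid (Function.End X)}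

attribute [local instance] subTopology

/-- The basic set `[j]_s`. -/
def cylinder (j : M) (s : Finset X) : Set M :=
  {k | ∀ x ∈ s, (k : Function.End X) x = (j : Function.End X) x}

theorem self_mem_cylinder (j : M) (s : Finset X) : j ∈ cylinder j s := fun _ _ => rfl

theorem mem_cylinder_iff_of_mem {j k k' : M} {s : Finset X} (h : k' ∈ cylinder k s) :
    k' ∈ cylinder j s ↔ k ∈ cylinder j s :=
  forall₂_congr fun x hx => by rw [h x hx]

theorem mul_mem_cylinder_mul {q q' : M} {s : Finset X} (r : M) (h : q' ∈ cylinder q s) :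
    r * q' ∈ cylinder (r * q) s := fun x hx =>
  congrArg (r : Function.End X) (h x hx)

theorem continuous_apply_subTopology (x : X) :
    Continuous[subTopology M, ⊥] fun k : M => (k : Function.End X) x := by
  let _ : TopologicalSpace X := ⊥
  exact (continuous_apply x).comp (continuous_induced_dom (t := endTopology X))

theorem isClopen_setOf_apply_eq (x c : X) : IsClopen {k : M | (k : Function.End X) x = c} := by
  let _ : TopologicalSpace X := ⊥
  have : DiscreteTopology X := ⟨rfl⟩
  exact (isClopen_discrete {c}).preimage (continuous_apply_subTopology x)

theorem isClopen_cylinder (j : M) (s : Finset X) : IsClopen (cylinder j s) := by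
  have : cylinder j s = ⋂ x ∈ s, {k : M | (k : Function.End X) x = (j : Function.End X) x} := by
    ext k
    simp [cylinder]
  rw [this]
  exact isClopen_biInter_finset fun x _ => isClopen_setOf_apply_eq x _

theorem isTopologicalBasis_cylinder :
    IsTopologicalBasis {U : Set M | ∃ (j : M) (s : Finset X), U = cylinder j s} := by
  let _ : TopologicalSpace X := ⊥
  let _ := endTopology X
  refine isTopologicalBasis_of_isOpen_of_nhds ?_ fun a u ha hu => ?_
  · rintro U ⟨j, s, rfl⟩
    exact (isClopen_cylinder j s).isOpen
  · obtain ⟨t, ht, rfl⟩ := isOpen_induced_iff.1 hu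
    obtain ⟨I, v, hv, hsub⟩ := isOpen_pi_iff.1 (show IsOpen (X := X → X) t from ht) _ ha
    refine ⟨cylinder a I, ⟨a, I, rfl⟩, self_mem_cylinder a I, fun k hk => hsub fun x hx => ?_⟩
    simpa only [hk x hx] using (hv x hx).2

theorem t0Space_subTopology : T0Space M :=
  let _ : TopologicalSpace X := ⊥
  have : DiscreteTopology X := ⟨rfl⟩
  t0Space_of_injective_of_continuous (Y := X → X) Subtype.val_injective continuous_induced_dom

theorem continuous_mul_subTopology : Continuous fun p : M × M => p.1 * p.2 := by
  let _ : TopologicalSpace X := ⊥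
  have : DiscreteTopology X := ⟨rfl⟩
  refine continuous_induced_rng.2 (continuous_pi fun x => continuous_discrete_rng.2 fun c => ?_)
  have : (fun p : M × M => ((p.1 * p.2 : M) : Function.End X) x) ⁻¹' {c} =
      ⋃ y : X, {k : M | (k : Function.End X) y = c} ×ˢ {k : M | (k : Function.End X) x = y} := by
    ext p
    simp only [Set.mem_preimage, Set.mem_singleton_iff, Set.mem_iUnion, Set.mem_prod,
      Set.mem_ofPred_eq]
    exact ⟨fun h => ⟨_, h, rfl⟩, fun ⟨_, h, hy⟩ => by rw [← hy] at h; exact h⟩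
  change IsOpen ((fun p : M × M => ((p.1 * p.2 : M) : Function.End X) x) ⁻¹' {c})
  rw [this]
  exact isOpen_iUnion fun y => (isClopen_setOf_apply_eq y c).isOpen.prod
    (isClopen_setOf_apply_eq x y).isOpen

theorem isOpen_setOf_forall_mul_mem_cylinder_iff (j : M) (s : Finset X) (p : M) :
    IsOpen {q : M | ∀ r : M, r * q ∈ cylinder j s ↔ r * p ∈ cylinder j s} :=
  isOpen_iff_forall_mem_open.2 fun q hq =>
    ⟨cylinder q s,
      fun _ hq' r => (mem_cylinder_iff_of_mem (mul_mem_cylinder_mul r hq')).trans (hq r),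
      (isClopen_cylinder q s).isOpen, self_mem_cylinder q s⟩

end Function.End

/-- Any submonoid of `Function.End X` with the pointwise topology is a left powder
monoid: it is a T₀ topological monoid, the sets `[j]_s = {k | ∀ x ∈ s, k x = j x}`
form a basis of clopen sets, and for each such basic set `U` and each `p` the set
`I^U_p = {q | ∀ r, r * q ∈ U ↔ r * p ∈ U}` is open. -/
theorem submonoid_of_end_is_left_powder (X : Type*) (M : Submonoid (Function.End X)) :
    letI := subTopology M
    T0Space M ∧ Continuous (fun p : M × M => p.1 * p.2) ∧
      TopologicalSpace.IsTopologicalBasis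
        {U : Set M | ∃ (j : M) (s : Finset X),
          U = {k : M | ∀ x ∈ s, (k : Function.End X) x = (j : Function.End X) x}} ∧
      (∀ (j : M) (s : Finset X),
        IsClopen {k : M | ∀ x ∈ s, (k : Function.End X) x = (j : Function.End X) x}) ∧
      (∀ (j : M) (s : Finset X) (p : M),
        IsOpen {q : M | ∀ r : M,
          (r * q ∈ {k : M | ∀ x ∈ s, (k : Function.End X) x = (j : Function.End X) x}) ↔
          (r * p ∈ {k : M | ∀ x ∈ s, (k : Function.End X) x = (j : Function.End X) x})}) :=
  ⟨Function.End.t0Space_subTopology, Function.End.continuous_mul_subTopology,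
    Function.End.isTopologicalBasis_cylinder, Function.End.isClopen_cylinder,
    Function.End.isOpen_setOf_forall_mul_mem_cylinder_iff⟩
end

section
/- (Woodin's observation, abstract form) Let j : Ordinal → Ordinal be strictly monotone and ω-continuous, let δ be a limit ordinal with j δ = δ, and let S be a set of ordinals less than δ that intersects every ω-club in δ (an ω-stationary subset of δ). Then S intersects the image of j: there exists an ordinal α < δ with j α ∈ S. -/
/-! The image of `j` below `δ` is itself an `ω`-club in `δ`: it is unbounded because
`β ≤ j β < j δ = δ`, and closed because a strictly increasing sequence `j (g n)` comes from a
strictly increasing `g`, so its supremum is `j (⨆ n, g n)` by `ω`-continuity. -/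

/-- A function on ordinals is `ω`-continuous if it commutes with suprema of strictly
increasing `ω`-sequences. -/
def OmegaContinuous (j : Ordinal → Ordinal) : Prop :=
  ∀ f : ℕ → Ordinal, StrictMono f → j (⨆ n, f n) = ⨆ n, j (f n)

/-- `C` is an `ω`-club in `δ`: a set of ordinals less than `δ` that is unbounded in `δ`
and closed under suprema of strictly increasing `ω`-sequences with supremum below `δ`. -/
def IsOmegaClub (C : Set Ordinal) (δ : Ordinal) : Prop :=
  (∀ α ∈ C, α < δ) ∧
  (∀ β < δ, ∃ α ∈ C, β ≤ α) ∧
  (∀ f : ℕ → Ordinal, StrictMono f → (∀ n, f n ∈ C) → (⨆ n, f n) < δ →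
    (⨆ n, f n) ∈ C)

theorem OmegaContinuous.iSup_mem_range {j : Ordinal → Ordinal} (hj : StrictMono j)
    (hjc : OmegaContinuous j) {f : ℕ → Ordinal} (hf : StrictMono f)
    (hmem : ∀ n, f n ∈ Set.range j) : (⨆ n, f n) ∈ Set.range j := by
  choose g hg using hmem
  have hg_mono : StrictMono g := fun m n hmn => hj.lt_iff_lt.mp (by simpa only [hg] using hf hmn)
  exact ⟨⨆ n, g n, by rw [hjc g hg_mono]; exact iSup_congr hg⟩

theorem isOmegaClub_range_inter_Iio {j : Ordinal → Ordinal} (hj : StrictMono j)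
    (hjc : OmegaContinuous j) {δ : Ordinal} (hjδ : j δ = δ) :
    IsOmegaClub (Set.range j ∩ Set.Iio δ) δ := by
  refine ⟨fun α hα => hα.2, fun β hβ => ?_, fun f hf hmem hsup => ?_⟩
  · exact ⟨j β, ⟨⟨β, rfl⟩, hjδ ▸ hj hβ⟩, hj.le_apply⟩
  · exact ⟨hjc.iSup_mem_range hj hf fun n => (hmem n).1, hsup⟩

theorem stationary_meets_image_general (j : Ordinal → Ordinal)
    (hj : StrictMono j) (hjc : OmegaContinuous j)
    (δ : Ordinal) (hjδ : j δ = δ)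
    (S : Set Ordinal)
    (hstat : ∀ C : Set Ordinal, IsOmegaClub C δ → (S ∩ C).Nonempty) :
    ∃ α, α < δ ∧ j α ∈ S := by
  obtain ⟨_, hαS, ⟨α, rfl⟩, hαδ⟩ := hstat _ (isOmegaClub_range_inter_Iio hj hjc hjδ)
  exact ⟨α, hj.le_apply.trans_lt hαδ, hαS⟩

/-- Woodin's observation, abstract form: an `ω`-stationary subset of `δ` meets the
image of any strictly monotone `ω`-continuous map fixing `δ`. -/
theorem stationary_meets_image (j : Ordinal → Ordinal)
    (hj : StrictMono j) (hjc : OmegaContinuous j)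
    (δ : Ordinal) (hδ : Order.IsSuccLimit δ) (hjδ : j δ = δ)
    (S : Set Ordinal) (hS : ∀ α ∈ S, α < δ)
    (hstat : ∀ C : Set Ordinal, IsOmegaClub C δ → (S ∩ C).Nonempty) :
    ∃ α, α < δ ∧ j α ∈ S :=
  stationary_meets_image_general j hj hjc δ hjδ S hstat
end
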